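/- arXiv:2406.11512 — 3 statements merged into one kernel-verified Lean document; each statement's English description precedes it below -/
import Mathlib

section
/- Let S be a surface with b₁(S) = 0, b₀(S) = 1. Then for every i ≥ 0 and every m ≥ 2i + 4, the (2i+4)-th Betti number of the Hilbert scheme S^[m] equals its limit as m → ∞; i.e. b_{2i+4}(S^[m]) stabilizes for m ≥ 2i+4. -/
open PowerSeries

/-- "Weight" property: z-order ≥ t-degree. -/
def Wt (F : PowerSeries (PowerSeries ℚ)) : Prop :=
  ∀ j d : ℕ, d < j → PowerSeries.coeff d (PowerSeries.coeff j F) = 0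

lemma Wt_one : Wt 1 := by
  intro j d hdj
  rw [PowerSeries.coeff_one, if_neg (by omega)]
  simp

lemma Wt_mul {F G : PowerSeries (PowerSeries ℚ)} (hF : Wt F) (hG : Wt G) : Wt (F * G) := by
  intro j d hdj
  rw [PowerSeries.coeff_mul, map_sum]
  apply Finset.sum_eq_zero
  rintro ⟨j1, j2⟩ hj
  replace hj := Finset.HasAntidiagonal.mem_antidiagonal.mp hj
  rw [PowerSeries.coeff_mul]
  apply Finset.sum_eq_zero
  rintro ⟨d1, d2⟩ hd
  replace hd := Finset.HasAntidiagonal.mem_antidiagonal.mp hd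
  simp only at *
  rcases lt_or_ge d1 j1 with h | h
  · rw [hF j1 d1 h, zero_mul]
  · rw [hG j2 d2 (by omega), mul_zero]

lemma Wt_pow {F : PowerSeries (PowerSeries ℚ)} (hF : Wt F) (n : ℕ) : Wt (F ^ n) := by
  induction n with
  | zero => simpa using Wt_one
  | succ k ih => rw [pow_succ]; exact Wt_mul ih hF

lemma Wt_inv (a m : ℕ) (hm : 1 ≤ m) (ham : m ≤ a) :
    Wt (PowerSeries.invOfUnit
      (1 - PowerSeries.C ((PowerSeries.X : PowerSeries ℚ) ^ a) *
        (PowerSeries.X : PowerSeries (PowerSeries ℚ)) ^ m) 1) := by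
  set φ : PowerSeries (PowerSeries ℚ) :=
    1 - PowerSeries.C ((PowerSeries.X : PowerSeries ℚ) ^ a) *
      (PowerSeries.X : PowerSeries (PowerSeries ℚ)) ^ m with hφ
  set F := PowerSeries.invOfUnit φ 1 with hFdef
  have hconst : PowerSeries.constantCoeff φ = (1 : (PowerSeries ℚ)ˣ) := by
    rw [hφ]
    simp [map_pow, PowerSeries.constantCoeff_X, zero_pow (by omega : m ≠ 0)]
  have hmul : φ * F = 1 := PowerSeries.mul_invOfUnit φ 1 hconst
  have hrec : F = 1 + (PowerSeries.C ((PowerSeries.X : PowerSeries ℚ) ^ a) * F) *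
      (PowerSeries.X : PowerSeries (PowerSeries ℚ)) ^ m := by
    have : (1 - PowerSeries.C ((PowerSeries.X : PowerSeries ℚ) ^ a) *
        (PowerSeries.X : PowerSeries (PowerSeries ℚ)) ^ m) * F = 1 := by rw [← hφ]; exact hmul
    linear_combination this
  intro j d hdj
  induction j using Nat.strong_induction_on generalizing d with
  | _ j ih =>
    conv_lhs => rw [hrec]
    rw [map_add, map_add, PowerSeries.coeff_one, if_neg (by omega)]
    rw [PowerSeries.coeff_mul_X_pow']
    split_ifs with hmj
    · rw [PowerSeries.coeff_C_mul]
      rw [show ((PowerSeries.X : PowerSeries ℚ) ^ a) * _ = _ *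
        ((PowerSeries.X : PowerSeries ℚ) ^ a) from mul_comm _ _]
      rw [PowerSeries.coeff_mul_X_pow']
      split_ifs with had
      · rw [ih (j - m) (by omega) (d - a) (by omega)]
        simp
      · simp
    · simp

/-- Göttsche's formula (with b₁(S)=0, b₀(S)=1): the generating series
Σ_n p(S^[n],z) t^n = Π_{m≥1} (1−z^{2m−2}t^m)⁻¹(1−z^{2m}t^m)^{−b₂}(1−z^{2m+2}t^m)⁻¹.
Here `p n` is the Poincaré polynomial of S^[n] (a power series in z), extracted as
the coefficient of tⁿ in any sufficiently long partial product (which suffices since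
the factor indexed by m only contributes in t-degrees ≥ m). Conclusion: the Betti
number b_{2i+4}(S^[m]) = coeff of z^{2i+4} in p(S^[m],z) stabilizes for m ≥ 2i+4. -/
theorem stmt12 (b₂ : ℕ)
    (term : ℕ → PowerSeries (PowerSeries ℚ))
    (hterm : ∀ m : ℕ, term m =
      PowerSeries.invOfUnit
        (1 - PowerSeries.C
          ((PowerSeries.X : PowerSeries ℚ) ^ (2 * m - 2)) *
          (PowerSeries.X : PowerSeries (PowerSeries ℚ)) ^ m) 1 *
      (PowerSeries.invOfUnit
        (1 - PowerSeries.C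
          ((PowerSeries.X : PowerSeries ℚ) ^ (2 * m)) *
          (PowerSeries.X : PowerSeries (PowerSeries ℚ)) ^ m) 1) ^ b₂ *
      PowerSeries.invOfUnit
        (1 - PowerSeries.C
          ((PowerSeries.X : PowerSeries ℚ) ^ (2 * m + 2)) *
          (PowerSeries.X : PowerSeries (PowerSeries ℚ)) ^ m) 1)
    (p : ℕ → PowerSeries ℚ)
    (hp : ∀ n N : ℕ, n ≤ N →
      p n = PowerSeries.coeff n (∏ m ∈ Finset.Icc 1 N, term m))
    (i : ℕ) :
    ∀ m : ℕ, 2 * i + 4 ≤ m →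
      PowerSeries.coeff (2 * i + 4) (p m) =
        PowerSeries.coeff (2 * i + 4) (p (2 * i + 4)) := by
  intro m hm
  rw [hp m m le_rfl, hp (2 * i + 4) m hm]
  set P : PowerSeries (PowerSeries ℚ) := ∏ k ∈ Finset.Icc 1 m, term k with hPdef
  set Q : PowerSeries (PowerSeries ℚ) :=
    (PowerSeries.invOfUnit
        (1 - PowerSeries.C
          ((PowerSeries.X : PowerSeries ℚ) ^ (2 * 1)) *
          (PowerSeries.X : PowerSeries (PowerSeries ℚ)) ^ 1) 1) ^ b₂ *
      PowerSeries.invOfUnit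
        (1 - PowerSeries.C
          ((PowerSeries.X : PowerSeries ℚ) ^ (2 * 1 + 2)) *
          (PowerSeries.X : PowerSeries (PowerSeries ℚ)) ^ 1) 1 *
      ∏ k ∈ Finset.Icc 2 m, term k with hQdef
  have hsplit : Finset.Icc 1 m = insert 1 (Finset.Icc 2 m) := by
    ext x; simp only [Finset.mem_Icc, Finset.mem_insert]; omega
  have hP1 : P = PowerSeries.invOfUnit
        (1 - PowerSeries.C
          ((PowerSeries.X : PowerSeries ℚ) ^ (2 * 1 - 2)) *
          (PowerSeries.X : PowerSeries (PowerSeries ℚ)) ^ 1) 1 * Q := by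
    rw [hPdef, hsplit, Finset.prod_insert (by simp), hterm 1, hQdef]
    ring
  have hWQ : Wt Q := by
    rw [hQdef]
    refine Wt_mul (Wt_mul (Wt_pow (Wt_inv (2 * 1) 1 le_rfl (by omega)) b₂)
      (Wt_inv (2 * 1 + 2) 1 le_rfl (by omega))) ?_
    refine Finset.prod_induction term Wt (fun _ _ => Wt_mul) Wt_one ?_
    intro k hk
    rw [Finset.mem_Icc] at hk
    rw [hterm k]
    exact Wt_mul (Wt_mul (Wt_inv (2 * k - 2) k (by omega) (by omega))
      (Wt_pow (Wt_inv (2 * k) k (by omega) (by omega)) b₂))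
      (Wt_inv (2 * k + 2) k (by omega) (by omega))
  -- (1 - X) * P = Q
  have hφ : (1 - PowerSeries.C
          ((PowerSeries.X : PowerSeries ℚ) ^ (2 * 1 - 2)) *
          (PowerSeries.X : PowerSeries (PowerSeries ℚ)) ^ 1) * P = Q := by
    rw [hP1, ← mul_assoc, PowerSeries.mul_invOfUnit _ 1 (by
      simp [map_pow, PowerSeries.constantCoeff_X]), one_mul]
  have hstep : ∀ j : ℕ, 1 ≤ j →
      PowerSeries.coeff j Q =
        PowerSeries.coeff j P -
          PowerSeries.coeff (j - 1) P := by
    intro j hj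
    rw [← hφ, sub_mul, one_mul, map_sub]
    congr 1
    rw [show (2 * 1 - 2 : ℕ) = 0 from rfl, pow_zero, map_one, one_mul]
    rw [mul_comm, PowerSeries.coeff_mul_X_pow' P 1 j, if_pos hj]
  have key : ∀ j : ℕ, 2 * i + 4 ≤ j →
      PowerSeries.coeff (2 * i + 4) (PowerSeries.coeff j P) =
        PowerSeries.coeff (2 * i + 4)
          (PowerSeries.coeff (2 * i + 4) P) := by
    intro j hj
    induction j, hj using Nat.le_induction with
    | base => rfl
    | succ j hj ih =>
      have h0 : PowerSeries.coeff (2 * i + 4)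
          (PowerSeries.coeff (j + 1) Q) = 0 :=
        hWQ (j + 1) (2 * i + 4) (by omega)
      rw [hstep (j + 1) (by omega)] at h0
      simp only [Nat.add_sub_cancel, map_sub] at h0
      have := sub_eq_zero.mp h0
      rw [this, ih]
  exact key m hm
end

section
/- Let S = S₁ be the blowup of ℙ² at one point, with h the pullback of the hyperplane class and e₁ the exceptional divisor. For β = ah − de₁ with a > d > 0, the codimension of the locus of non-integral curves in |β| equals min{a − d, d + 1}. -/
/-!
Encode the class `b • h - c • e₁` as `(b, c)`. For classes with nonnegative
`e₁`-coefficient, Riemann–Roch gives `dim |β₁ + β₂| - dim |β₁| - dim |β₂| = β₁ · β₂ = b b' - c c'`,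
and for a nontrivial splitting of `a h - d e₁` into such classes this is at least `a - d`, with
equality when a line through the blown-up point splits off. A splitting in which one summand has
negative `e₁`-coefficient `c' < 0` contains `-c'` copies of `e₁` in its fixed part, and costs at
least `d + 1`, with equality for `β = e₁ + (a h - (d + 1) e₁)`.
-/

namespace BlowupP2

def IsEffective (β : ℤ × ℤ) : Prop := 0 ≤ β.1 ∧ β.2 ≤ β.1

def linSysDim (β : ℤ × ℤ) : ℤ :=
  if 0 ≤ β.2 then (β.1 * (β.1 + 3) - β.2 * (β.2 + 1)) / 2 else β.1 * (β.1 + 3) / 2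

def splittingDims (β : ℤ × ℤ) : Set ℤ :=
  {x | ∃ β₁ β₂ : ℤ × ℤ, IsEffective β₁ ∧ IsEffective β₂ ∧ β₁ ≠ 0 ∧ β₂ ≠ 0 ∧
    β₁ + β₂ = β ∧ x = linSysDim β₁ + linSysDim β₂}

theorem two_mul_linSysDim (b c : ℤ) :
    2 * linSysDim (b, c) = if 0 ≤ c then b * (b + 3) - c * (c + 1) else b * (b + 3) := by
  have hb : 2 ∣ b * (b + 3) := by
    rw [show b * (b + 3) = b * (b + 1) + 2 * b by ring]
    exact dvd_add (Int.even_mul_succ_self b).two_dvd (dvd_mul_right 2 b)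
  have hc : 2 ∣ c * (c + 1) := (Int.even_mul_succ_self c).two_dvd
  unfold linSysDim
  split_ifs
  · exact Int.mul_ediv_cancel' (dvd_sub hb hc)
  · exact Int.mul_ediv_cancel' hb

theorem linSysDim_add_of_nonneg {b c b' c' : ℤ} (hc : 0 ≤ c) (hc' : 0 ≤ c') :
    linSysDim (b + b', c + c') =
      linSysDim (b, c) + linSysDim (b', c') + (b * b' - c * c') := by
  have h := two_mul_linSysDim (b + b') (c + c')
  have h₁ := two_mul_linSysDim b c
  have h₂ := two_mul_linSysDim b' c'
  rw [if_pos (add_nonneg hc hc')] at h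
  rw [if_pos hc] at h₁
  rw [if_pos hc'] at h₂
  refine mul_left_cancel₀ (two_ne_zero (α := ℤ)) ?_
  linear_combination h - h₁ - h₂

theorem linSysDim_succ {b c : ℤ} (hc : 0 ≤ c) :
    linSysDim (b, c + 1) + (c + 1) = linSysDim (b, c) := by
  have h := two_mul_linSysDim b c
  have h₁ := two_mul_linSysDim b (c + 1)
  rw [if_pos hc] at h
  rw [if_pos (by omega)] at h₁
  refine mul_left_cancel₀ (two_ne_zero (α := ℤ)) ?_
  linear_combination h₁ - h

theorem add_sub_add_le_mul_sub_mul {b c b' c' : ℤ} (hcb : c ≤ b) (hc' : 0 ≤ c')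
    (hcb' : c' ≤ b') (hb : 0 < b) (hb' : 0 < b') (hcc' : 0 < c + c') :
    b + b' - (c + c') ≤ b * b' - c * c' := by
  obtain ⟨u, hu, rfl⟩ : ∃ u, 0 ≤ u ∧ b = c + u := ⟨b - c, by omega, by ring⟩
  obtain ⟨v, hv, rfl⟩ : ∃ v, 0 ≤ v ∧ b' = c' + v := ⟨b' - c', by omega, by ring⟩
  rcases hu.eq_or_lt with rfl | hu
  · nlinarith
  rcases hv.eq_or_lt with rfl | hv
  · nlinarith
  nlinarith [mul_nonneg hb.le hv.le, mul_nonneg hc' hu.le, mul_pos hu hv]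

theorem linSysDim_add_le_of_neg {b c b' c' : ℤ} (hb : 0 ≤ b) (hb' : 0 ≤ b') (hc' : c' < 0)
    (hcc' : 0 ≤ c + c') :
    linSysDim (b, c) + linSysDim (b', c') + (c + c' + 1) ≤ linSysDim (b + b', c + c') := by
  have h := two_mul_linSysDim (b + b') (c + c')
  have h₁ := two_mul_linSysDim b c
  have h₂ := two_mul_linSysDim b' c'
  rw [if_pos hcc'] at h
  rw [if_pos (by omega)] at h₁
  rw [if_neg (by omega)] at h₂
  nlinarith [mul_nonneg hb hb', mul_nonneg (show 0 ≤ -c' - 1 by omega) hcc',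
    mul_nonneg (show 0 ≤ -c' - 1 by omega) (show 0 ≤ -c' + 2 by omega)]

theorem le_of_mem_splittingDims {a d x : ℤ} (hd : 0 < d) (hx : x ∈ splittingDims (a, d)) :
    x ≤ linSysDim (a, d) - min (a - d) (d + 1) := by
  obtain ⟨⟨b, c⟩, ⟨b', c'⟩, ⟨hb, hcb⟩, ⟨hb', hcb'⟩, hne, hne', hsum, rfl⟩ := hx
  simp only [Prod.mk_add_mk, Prod.mk.injEq] at hsum hb hcb hb' hcb'
  obtain ⟨rfl, rfl⟩ := hsum
  have hmin₁ := min_le_left (b + b' - (c + c')) (c + c' + 1)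
  have hmin₂ := min_le_right (b + b' - (c + c')) (c + c' + 1)
  rcases lt_or_ge c' 0 with hc' | hc'
  · linarith [linSysDim_add_le_of_neg hb hb' hc' hd.le]
  rcases lt_or_ge c 0 with hc | hc
  · have := linSysDim_add_le_of_neg (c := c') hb' hb hc (by omega)
    rw [add_comm b', add_comm c'] at this
    linarith
  have hpos : 0 < b := by
    by_contra! h
    exact hne (Prod.ext (by simp; omega) (by simp; omega))
  have hpos' : 0 < b' := by
    by_contra! h
    exact hne' (Prod.ext (by simp; omega) (by simp; omega))
  rw [linSysDim_add_of_nonneg hc hc']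
  linarith [add_sub_add_le_mul_sub_mul hcb hc' hcb' hpos hpos' hd]

theorem linSysDim_sub_min_mem_splittingDims {a d : ℤ} (hd : 0 < d) (had : d < a) :
    linSysDim (a, d) - min (a - d) (d + 1) ∈ splittingDims (a, d) := by
  rcases min_cases (a - d) (d + 1) with ⟨hmin, -⟩ | ⟨hmin, -⟩ <;> rw [hmin]
  · refine ⟨(1, 1), (a - 1, d - 1), ⟨zero_le_one, le_rfl⟩, ⟨by simp; omega, by simp; omega⟩,
      by simp, by simp [Prod.ext_iff]; omega, by simp, ?_⟩
    have h := linSysDim_add_of_nonneg (b := 1) (b' := a - 1) zero_le_one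
      (show 0 ≤ d - 1 by omega)
    rw [add_sub_cancel, add_sub_cancel] at h
    linarith
  · refine ⟨(0, -1), (a, d + 1), ⟨le_rfl, by simp⟩, ⟨by simp; omega, by simp; omega⟩,
      by simp, by simp [Prod.ext_iff]; omega, by simp, ?_⟩
    have h := linSysDim_succ (b := a) hd.le
    have h₀ : linSysDim (0, -1) = 0 := by decide
    linarith

theorem isGreatest_splittingDims {a d : ℤ} (hd : 0 < d) (had : d < a) :
    IsGreatest (splittingDims (a, d)) (linSysDim (a, d) - min (a - d) (d + 1)) :=
  ⟨linSysDim_sub_min_mem_splittingDims hd had, fun _ hx => le_of_mem_splittingDims hd hx⟩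

end BlowupP2

open BlowupP2 in
/-- On the blowup S₁ of ℙ² at a point (Pic = ℤh ⊕ ℤe₁, K = −3h+e₁),
for β = a·h − d·e₁ with a > d > 0, the codimension of the non-integral locus in |β|
equals min{a−d, d+1}. A class b·h − c·e₁ is effective iff 0 ≤ b and c ≤ b, and the
dimension of its linear system is (b(b+3) − c(c+1))/2 if c ≥ 0, and b(b+3)/2
otherwise (fixed part a multiple of e₁). The non-integral locus is the union of the
images of |β₁| × |β₂| over nontrivial effective decompositions β = β₁ + β₂, so its
codimension is dim|β| minus the supremum of dim|β₁| + dim|β₂|. -/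
theorem stmt13 (a d : ℤ) (hd : 0 < d) (had : d < a)
    (eff : ℤ × ℤ → Prop) (heff : ∀ b : ℤ × ℤ, eff b ↔ 0 ≤ b.1 ∧ b.2 ≤ b.1)
    (dimLS : ℤ × ℤ → ℤ)
    (hdim : ∀ b : ℤ × ℤ, dimLS b =
      if 0 ≤ b.2 then (b.1 * (b.1 + 3) - b.2 * (b.2 + 1)) / 2
      else b.1 * (b.1 + 3) / 2) :
    dimLS (a, d) -
      sSup {x : ℤ | ∃ β₁ β₂ : ℤ × ℤ, eff β₁ ∧ eff β₂ ∧ β₁ ≠ 0 ∧ β₂ ≠ 0 ∧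
        β₁ + β₂ = (a, d) ∧ x = dimLS β₁ + dimLS β₂} = min (a - d) (d + 1) := by
  obtain rfl : eff = IsEffective := funext fun β => propext (heff β)
  obtain rfl : dimLS = linSysDim := funext hdim
  calc linSysDim (a, d) - sSup (splittingDims (a, d))
      = linSysDim (a, d) - (linSysDim (a, d) - min (a - d) (d + 1)) := by
        rw [(isGreatest_splittingDims hd had).csSup_eq]
    _ = min (a - d) (d + 1) := by ring
end

section
/- Let S = ℙ¹ × ℙ¹ and β = O(a₁, a₂) with a₁, a₂ > 0. Then the codimension of the locus of non-integral curves in |β| equals min{a₁, a₂}. -/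
/-!
The dimensions satisfy `dim|β₁ + β₂| = dim|β₁| + dim|β₂| + β₁·β₂`, so the codimension is the
minimum of the intersection number `β₁·β₂ = c₁d₂ + c₂d₁` over nontrivial splittings
`(a₁, a₂) = (c₁, c₂) + (d₁, d₂)`. Each such number is at least `min a₁ a₂`: if both `c₁, d₁` are
positive it is at least `c₂ + d₂ = a₂`, and otherwise, say `c₁ = 0`, it is at least `d₁ = a₁`.
Splitting off a single ruling attains the bound.
-/

namespace P1xP1

/-- A class `(b₁, b₂)` stands for `b₁ h₁ + b₂ h₂`; this is the intersection form, `h₁ · h₂ = 1`, `hᵢ² = 0`. -/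
def intersection (β₁ β₂ : ℕ × ℕ) : ℕ := β₁.1 * β₂.2 + β₁.2 * β₂.1

def linearSystemDim (β : ℕ × ℕ) : ℤ := ((β.1 : ℤ) + 1) * ((β.2 : ℤ) + 1) - 1

theorem linearSystemDim_add (β₁ β₂ : ℕ × ℕ) :
    linearSystemDim (β₁ + β₂) =
      linearSystemDim β₁ + linearSystemDim β₂ + intersection β₁ β₂ := by
  simp only [linearSystemDim, intersection, Prod.fst_add, Prod.snd_add]
  push_cast
  ring

theorem min_le_intersection {β₁ β₂ : ℕ × ℕ} (h₁ : β₁ ≠ 0) (h₂ : β₂ ≠ 0) :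
    min (β₁ + β₂).1 (β₁ + β₂).2 ≤ intersection β₁ β₂ := by
  obtain ⟨c₁, c₂⟩ := β₁
  obtain ⟨d₁, d₂⟩ := β₂
  simp only [ne_eq, Prod.mk_eq_zero, not_and_or] at h₁ h₂
  simp only [intersection, Prod.mk_add_mk]
  rcases Nat.eq_zero_or_pos c₁ with hc₁ | hc₁
  · have hc₂ : 1 ≤ c₂ := by omega
    calc min (c₁ + d₁) (c₂ + d₂) ≤ c₁ + d₁ := min_le_left _ _
      _ ≤ c₁ * d₂ + c₂ * d₁ := by subst hc₁; nlinarith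
  rcases Nat.eq_zero_or_pos d₁ with hd₁ | hd₁
  · have hd₂ : 1 ≤ d₂ := by omega
    calc min (c₁ + d₁) (c₂ + d₂) ≤ c₁ + d₁ := min_le_left _ _
      _ ≤ c₁ * d₂ + c₂ * d₁ := by subst hd₁; nlinarith
  calc min (c₁ + d₁) (c₂ + d₂) ≤ c₂ + d₂ := min_le_right _ _
    _ ≤ c₁ * d₂ + c₂ * d₁ := by nlinarith

theorem exists_intersection_eq_min {a₁ a₂ : ℕ} (h₁ : 0 < a₁) (h₂ : 0 < a₂) :
    ∃ β₁ β₂ : ℕ × ℕ, β₁ ≠ 0 ∧ β₂ ≠ 0 ∧ β₁ + β₂ = (a₁, a₂) ∧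
      intersection β₁ β₂ = min a₁ a₂ := by
  rcases le_total a₁ a₂ with h | h
  · refine ⟨(0, 1), (a₁, a₂ - 1), by simp, by simp [h₁.ne'], by simp; omega, ?_⟩
    simp [intersection, h]
  · refine ⟨(1, 0), (a₁ - 1, a₂), by simp, by simp [h₂.ne'], by simp; omega, ?_⟩
    simp [intersection, h]

end P1xP1

open P1xP1 in
/-- On S = ℙ¹ × ℙ¹ with β = O(a₁,a₂), a₁,a₂ > 0, the codimension of
the non-integral locus in |β| equals min{a₁,a₂}. Here dim|O(b₁,b₂)| =
(b₁+1)(b₂+1) − 1, and the non-integral locus is the union of the images of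
|β₁| × |β₂| over nontrivial effective decompositions β = β₁ + β₂, so its
codimension is dim|β| minus the supremum of dim|β₁| + dim|β₂|. -/
theorem stmt14 (a₁ a₂ : ℕ) (h₁ : 0 < a₁) (h₂ : 0 < a₂)
    (dimLS : ℕ × ℕ → ℤ)
    (hdim : ∀ b : ℕ × ℕ, dimLS b = ((b.1 : ℤ) + 1) * ((b.2 : ℤ) + 1) - 1) :
    dimLS (a₁, a₂) -
      sSup {x : ℤ | ∃ β₁ β₂ : ℕ × ℕ, β₁ ≠ 0 ∧ β₂ ≠ 0 ∧
        β₁ + β₂ = (a₁, a₂) ∧ x = dimLS β₁ + dimLS β₂} =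
      min (a₁ : ℤ) (a₂ : ℤ) := by
  obtain rfl : dimLS = linearSystemDim := funext hdim
  have hsplit {β₁ β₂ : ℕ × ℕ} (h : β₁ + β₂ = (a₁, a₂)) :
      linearSystemDim β₁ + linearSystemDim β₂ =
        linearSystemDim (a₁, a₂) - intersection β₁ β₂ := by
    rw [← h, linearSystemDim_add]
    ring
  have hgreatest : IsGreatest {x : ℤ | ∃ β₁ β₂ : ℕ × ℕ, β₁ ≠ 0 ∧ β₂ ≠ 0 ∧
      β₁ + β₂ = (a₁, a₂) ∧ x = linearSystemDim β₁ + linearSystemDim β₂}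
      (linearSystemDim (a₁, a₂) - min a₁ a₂) := by
    refine ⟨?_, ?_⟩
    · obtain ⟨β₁, β₂, hβ₁, hβ₂, h, hmin⟩ := exists_intersection_eq_min h₁ h₂
      exact ⟨β₁, β₂, hβ₁, hβ₂, h, by rw [hsplit h, hmin]⟩
    · rintro _ ⟨β₁, β₂, hβ₁, hβ₂, h, rfl⟩
      have hmin := min_le_intersection hβ₁ hβ₂
      rw [h] at hmin
      rw [hsplit h]
      omega
  rw [hgreatest.csSup_eq]
  push_cast
  ring
end
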